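/- For fuzzy vectors u, v, w on ℝⁿ, the following are equivalent: (i) u = v ⊕ w, where (v ⊕ w)(t) = sup_{r+s=t} min(v(r), w(s)); (ii) u_α = v_α + w_α (Minkowski sum of level sets) for all α ∈ [0,1]; (iii) h_u = h_v + h_w as functions on [0,1] × S^{n−1}. -/

import Mathlib

open scoped RealInnerProductSpace Pointwise

noncomputable section

/-- A fuzzy vector: regular, compactly supported, quasi-concave, upper semi-continuous
function `u : ℝⁿ → [0,1]`. -/
def IsFuzzyVector {n : ℕ} (u : EuclideanSpace ℝ (Fin n) → ℝ) : Prop :=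
  (∀ t, u t ∈ Set.Icc (0:ℝ) 1) ∧
  (∃ t, u t = 1) ∧
  IsCompact (closure {t | 0 < u t}) ∧
  (∀ s t : EuclideanSpace ℝ (Fin n), ∀ lam ∈ Set.Icc (0:ℝ) 1,
      min (u s) (u t) ≤ u (lam • s + (1 - lam) • t)) ∧
  (∀ α : ℝ, IsClosed {t | α ≤ u t})

/-- The α-level sets of a fuzzy vector. -/
def levelSet {n : ℕ} (u : EuclideanSpace ℝ (Fin n) → ℝ) (α : ℝ) :
    Set (EuclideanSpace ℝ (Fin n)) :=
  if α = 0 then closure {t | 0 < u t} else {t | α ≤ u t}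

/-- The support function of a fuzzy vector. -/
def fuzzySupp {n : ℕ} (u : EuclideanSpace ℝ (Fin n) → ℝ) (α : ℝ)
    (x : EuclideanSpace ℝ (Fin n)) : ℝ :=
  sSup ((fun t => ⟪t, x⟫) '' levelSet u α)

/-- Addition of fuzzy vectors by Zadeh's extension principle. -/
def fuzzyAdd {n : ℕ} (v w : EuclideanSpace ℝ (Fin n) → ℝ) :
    EuclideanSpace ℝ (Fin n) → ℝ :=
  fun t => sSup {m : ℝ | ∃ r s, r + s = t ∧ m = min (v r) (w s)}

/-!
The supremum defining `(v ⊕ w) t` is attained: `r ↦ min (v r) (w (t - r))` is upper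
semicontinuous with compact superlevel sets. Hence every superlevel set of `v ⊕ w` is the
Minkowski sum of those of `v` and `w`, and so is the support level set, the closure of a sum of
sets with compact closures being the sum of the closures. Conversely a `[0,1]`-valued function is
determined by its level sets at positive heights, which gives (i) ⇔ (ii). For (ii) ⇔ (iii), the
support function is additive under Minkowski sums, and a compact convex set is determined by its
support function on the unit sphere, by strict separation of a point from a closed convex set.
-/

theorem closure_add_of_isCompact_closure {G : Type*} [TopologicalSpace G] [AddMonoid G]
    [ContinuousAdd G] [T2Space G] {A B : Set G} (hA : IsCompact (closure A))
    (hB : IsCompact (closure B)) : closure (A + B) = closure A + closure B := by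
  refine (closure_minimal (Set.add_subset_add subset_closure subset_closure)
    (hA.add hB).isClosed).antisymm ?_
  rintro _ ⟨a, ha, b, hb, rfl⟩
  exact map_mem_closure₂ continuous_add ha hb fun p hp q hq => Set.add_mem_add hp hq

theorem UpperSemicontinuous.exists_forall_le_of_isCompact {X β : Type*} [TopologicalSpace X]
    [LinearOrder β] {f : X → β} (hf : UpperSemicontinuous f) (x₀ : X)
    (hK : IsCompact {x | f x₀ ≤ f x}) : ∃ x, ∀ y, f y ≤ f x := by
  obtain ⟨x, hx, hmax⟩ := (hf.upperSemicontinuousOn _).exists_isMaxOn ⟨x₀, le_refl (f x₀)⟩ hK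
  refine ⟨x, fun y => ?_⟩
  rcases le_or_gt (f x₀) (f y) with hy | hy
  · exact hmax hy
  · exact hy.le.trans hx

theorem le_of_forall_setOf_le_subset {X : Type*} {f g : X → ℝ} (hf : ∀ x, f x ≤ 1)
    (hg : ∀ x, 0 ≤ g x) (h : ∀ α ∈ Set.Ioc (0:ℝ) 1, {x | α ≤ f x} ⊆ {x | α ≤ g x}) :
    f ≤ g := by
  intro x
  rcases le_or_gt (f x) 0 with hx | hx
  · exact hx.trans (hg x)
  · exact h (f x) ⟨hx, hf x⟩ (le_refl (f x))

section SupportFunction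

variable {E : Type*} [NormedAddCommGroup E] [InnerProductSpace ℝ E]

def supportFun (A : Set E) (x : E) : ℝ :=
  sSup ((fun t => ⟪t, x⟫) '' A)

theorem IsCompact.bddAbove_image_inner {A : Set E} (hA : IsCompact A) (x : E) :
    BddAbove ((fun t => ⟪t, x⟫) '' A) :=
  (hA.image (continuous_id.inner continuous_const)).bddAbove

theorem supportFun_add {A B : Set E} (hA : IsCompact A) (hB : IsCompact B)
    (hAne : A.Nonempty) (hBne : B.Nonempty) (x : E) :
    supportFun (A + B) x = supportFun A x + supportFun B x := by
  have himage : (fun t => ⟪t, x⟫) '' (A + B) =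
      (fun t => ⟪t, x⟫) '' A + (fun t => ⟪t, x⟫) '' B :=
    Set.image_add ((innerₛₗ ℝ).flip x)
  rw [supportFun, himage]
  exact csSup_add (hAne.image _) (hA.bddAbove_image_inner x) (hBne.image _)
    (hB.bddAbove_image_inner x)

theorem exists_norm_eq_one_inner_lt_of_notMem [CompleteSpace E] {B : Set E} {a : E}
    (hB : IsClosed B) (hBc : Convex ℝ B) (hBne : B.Nonempty) (ha : a ∉ B) :
    ∃ x c, ‖x‖ = 1 ∧ (∀ b ∈ B, ⟪b, x⟫ < c) ∧ c < ⟪a, x⟫ := by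
  obtain ⟨f, c, hfB, hfa⟩ := geometric_hahn_banach_closed_point hBc hB ha
  set y : E := (InnerProductSpace.toDual ℝ E).symm f
  have hy : ∀ z, ⟪z, y⟫ = f z := fun z => by
    rw [real_inner_comm]; exact InnerProductSpace.toDual_symm_apply
  have hy0 : y ≠ 0 := by
    rintro h0
    obtain ⟨b, hb⟩ := hBne
    have hb' := hfB b hb
    rw [← hy, h0, inner_zero_right] at hb' hfa
    linarith
  have hnorm : 0 < ‖y‖⁻¹ := inv_pos.mpr (norm_pos_iff.mpr hy0)
  refine ⟨‖y‖⁻¹ • y, ‖y‖⁻¹ * c, by simp [norm_smul, hy0], fun b hb => ?_, ?_⟩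
  · rw [real_inner_smul_right, hy]
    exact mul_lt_mul_of_pos_left (hfB b hb) hnorm
  · rw [real_inner_smul_right, hy]
    exact mul_lt_mul_of_pos_left hfa hnorm

theorem subset_of_supportFun_le [CompleteSpace E] {A B : Set E} (hA : IsCompact A)
    (hB : IsClosed B) (hBc : Convex ℝ B) (hBne : B.Nonempty)
    (h : ∀ x, ‖x‖ = 1 → supportFun A x ≤ supportFun B x) : A ⊆ B := by
  intro a ha
  by_contra haB
  obtain ⟨x, c, hx, hcB, hca⟩ := exists_norm_eq_one_inner_lt_of_notMem hB hBc hBne haB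
  have hBx : supportFun B x ≤ c :=
    csSup_le (hBne.image _) (Set.forall_mem_image.mpr fun b hb => (hcB b hb).le)
  have hAx : ⟪a, x⟫ ≤ supportFun A x :=
    le_csSup (hA.bddAbove_image_inner x) (Set.mem_image_of_mem _ ha)
  linarith [h x hx]

theorem eq_add_iff_supportFun_eq [CompleteSpace E] {A B C : Set E}
    (hA : IsCompact A) (hB : IsCompact B) (hC : IsCompact C)
    (hAc : Convex ℝ A) (hBc : Convex ℝ B) (hCc : Convex ℝ C)
    (hAne : A.Nonempty) (hBne : B.Nonempty) (hCne : C.Nonempty) :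
    A = B + C ↔ ∀ x, ‖x‖ = 1 → supportFun A x = supportFun B x + supportFun C x := by
  refine ⟨fun h x _ => h ▸ supportFun_add hB hC hBne hCne x, fun h => ?_⟩
  simp only [← supportFun_add hB hC hBne hCne] at h
  exact (subset_of_supportFun_le hA (hB.add hC).isClosed (hBc.add hCc) (hBne.add hCne)
    fun x hx => (h x hx).le).antisymm
    (subset_of_supportFun_le (hB.add hC) hA.isClosed hAc hAne fun x hx => (h x hx).ge)

end SupportFunction

section FuzzyVector

variable {n : ℕ}

local notation "E" => EuclideanSpace ℝ (Fin n)

theorem levelSet_zero (u : E → ℝ) : levelSet u 0 = closure {t | 0 < u t} := if_pos rfl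

theorem levelSet_of_ne_zero (u : E → ℝ) {α : ℝ} (hα : α ≠ 0) :
    levelSet u α = {t | α ≤ u t} := if_neg hα

namespace IsFuzzyVector

variable {u : EuclideanSpace ℝ (Fin n) → ℝ}

theorem nonneg (hu : IsFuzzyVector u) (t : E) : 0 ≤ u t := (hu.1 t).1

theorem le_one (hu : IsFuzzyVector u) (t : E) : u t ≤ 1 := (hu.1 t).2

theorem upperSemicontinuous (hu : IsFuzzyVector u) : UpperSemicontinuous u :=
  upperSemicontinuous_iff_isClosed_preimage.mpr hu.2.2.2.2

theorem quasiconcaveOn (hu : IsFuzzyVector u) : QuasiconcaveOn ℝ Set.univ u := by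
  refine quasiconcaveOn_iff_min_le.mpr ⟨convex_univ, fun x _ y _ a b ha hb hab => ?_⟩
  obtain rfl : b = 1 - a := by linarith
  exact hu.2.2.2.1 x y a ⟨ha, by linarith⟩

theorem isCompact_setOf_le (hu : IsFuzzyVector u) {α : ℝ} (hα : 0 < α) :
    IsCompact {t | α ≤ u t} :=
  hu.2.2.1.of_isClosed_subset (hu.2.2.2.2 α) fun _ ht => subset_closure (hα.trans_le ht)

theorem isCompact_levelSet (hu : IsFuzzyVector u) {α : ℝ} (hα : 0 ≤ α) :
    IsCompact (levelSet u α) := by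
  rcases hα.eq_or_lt with rfl | hα
  · simpa only [levelSet_zero] using hu.2.2.1
  · simpa only [levelSet_of_ne_zero u hα.ne'] using hu.isCompact_setOf_le hα

theorem levelSet_nonempty (hu : IsFuzzyVector u) {α : ℝ} (hα : α ≤ 1) :
    (levelSet u α).Nonempty := by
  obtain ⟨t, ht⟩ := hu.2.1
  rcases eq_or_ne α 0 with rfl | hα0
  · exact ⟨t, by rw [levelSet_zero]; exact subset_closure (by simp [ht])⟩
  · exact ⟨t, by rw [levelSet_of_ne_zero u hα0]; exact hα.trans ht.ge⟩

theorem convex_levelSet (hu : IsFuzzyVector u) (α : ℝ) : Convex ℝ (levelSet u α) := by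
  rcases eq_or_ne α 0 with rfl | hα
  · simpa only [levelSet_zero, Set.mem_univ, true_and] using
      (hu.quasiconcaveOn.convex_gt 0).closure
  · simpa only [levelSet_of_ne_zero u hα, Set.mem_univ, true_and] using
      hu.quasiconcaveOn α

end IsFuzzyVector

variable {v w : EuclideanSpace ℝ (Fin n) → ℝ}

theorem min_le_fuzzyAdd (hv : IsFuzzyVector v) (w : E → ℝ) {r s t : E} (h : r + s = t) :
    min (v r) (w s) ≤ fuzzyAdd v w t :=
  le_csSup ⟨1, by rintro _ ⟨r, s, -, rfl⟩; exact (min_le_left _ _).trans (hv.le_one r)⟩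
    ⟨r, s, h, rfl⟩

theorem exists_fuzzyAdd_eq_min (hv : IsFuzzyVector v) (hw : IsFuzzyVector w) (t : E) :
    ∃ r s, r + s = t ∧ fuzzyAdd v w t = min (v r) (w s) := by
  set f : E → ℝ := fun r => min (v r) (w (t - r))
  have hf : UpperSemicontinuous f :=
    hv.upperSemicontinuous.inf (hw.upperSemicontinuous.comp (continuous_sub_left t))
  obtain ⟨r, hr⟩ : ∃ r, ∀ r', f r' ≤ f r := by
    by_cases hpos : ∃ r₀, 0 < f r₀
    · obtain ⟨r₀, hr₀⟩ := hpos
      refine hf.exists_forall_le_of_isCompact r₀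
        ((hv.isCompact_setOf_le hr₀).of_isClosed_subset (hf.isClosed_preimage _) ?_)
      exact fun r (hr : f r₀ ≤ f r) => (hr.trans (min_le_left _ _) : f r₀ ≤ v r)
    · simp only [not_exists, not_lt] at hpos
      exact ⟨0, fun r' => (hpos r').trans (le_min (hv.nonneg 0) (hw.nonneg _))⟩
  have hrt : r + (t - r) = t := add_sub_cancel r t
  refine ⟨r, t - r, hrt, le_antisymm ?_ (min_le_fuzzyAdd hv w hrt)⟩
  refine csSup_le ⟨_, 0, t, zero_add t, rfl⟩ ?_
  rintro _ ⟨r', s', rfl, rfl⟩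
  simpa only [f, add_sub_cancel_left] using hr r'

theorem fuzzyAdd_mem_Icc (hv : IsFuzzyVector v) (hw : IsFuzzyVector w) (t : E) :
    fuzzyAdd v w t ∈ Set.Icc (0:ℝ) 1 := by
  obtain ⟨r, s, -, h⟩ := exists_fuzzyAdd_eq_min hv hw t
  rw [h]
  exact ⟨le_min (hv.nonneg r) (hw.nonneg s), (min_le_left _ _).trans (hv.le_one r)⟩

theorem setOf_le_fuzzyAdd (hv : IsFuzzyVector v) (hw : IsFuzzyVector w) (α : ℝ) :
    {t | α ≤ fuzzyAdd v w t} = {t | α ≤ v t} + {t | α ≤ w t} := by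
  ext t
  constructor
  · intro ht
    obtain ⟨r, s, rfl, h⟩ := exists_fuzzyAdd_eq_min hv hw t
    rw [Set.mem_ofPred_eq, h, le_min_iff] at ht
    exact Set.add_mem_add ht.1 ht.2
  · rintro ⟨r, hr, s, hs, rfl⟩
    exact (le_min hr hs).trans (min_le_fuzzyAdd hv w rfl)

theorem setOf_lt_fuzzyAdd (hv : IsFuzzyVector v) (hw : IsFuzzyVector w) (α : ℝ) :
    {t | α < fuzzyAdd v w t} = {t | α < v t} + {t | α < w t} := by
  ext t
  constructor
  · intro ht
    obtain ⟨r, s, rfl, h⟩ := exists_fuzzyAdd_eq_min hv hw t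
    rw [Set.mem_ofPred_eq, h, lt_min_iff] at ht
    exact Set.add_mem_add ht.1 ht.2
  · rintro ⟨r, hr, s, hs, rfl⟩
    exact (lt_min hr hs).trans_le (min_le_fuzzyAdd hv w rfl)

theorem levelSet_fuzzyAdd (hv : IsFuzzyVector v) (hw : IsFuzzyVector w) (α : ℝ) :
    levelSet (fuzzyAdd v w) α = levelSet v α + levelSet w α := by
  rcases eq_or_ne α 0 with rfl | hα
  · simp only [levelSet_zero, setOf_lt_fuzzyAdd hv hw]
    exact closure_add_of_isCompact_closure hv.2.2.1 hw.2.2.1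
  · simp only [levelSet_of_ne_zero _ hα]
    exact setOf_le_fuzzyAdd hv hw α

theorem eq_fuzzyAdd_iff_levelSet_eq {u : E → ℝ} (hu : IsFuzzyVector u)
    (hv : IsFuzzyVector v) (hw : IsFuzzyVector w) :
    u = fuzzyAdd v w ↔
      ∀ α ∈ Set.Icc (0:ℝ) 1, levelSet u α = levelSet v α + levelSet w α := by
  simp only [← levelSet_fuzzyAdd hv hw]
  refine ⟨fun h _ _ => h ▸ rfl, fun h => ?_⟩
  have hlevel : ∀ α ∈ Set.Ioc (0:ℝ) 1, {t | α ≤ u t} = {t | α ≤ fuzzyAdd v w t} :=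
    fun α hα => by
      simpa only [levelSet_of_ne_zero _ hα.1.ne'] using h α (Set.Ioc_subset_Icc_self hα)
  exact le_antisymm
    (le_of_forall_setOf_le_subset hu.le_one (fun t => (fuzzyAdd_mem_Icc hv hw t).1)
      fun α hα => (hlevel α hα).subset)
    (le_of_forall_setOf_le_subset (fun t => (fuzzyAdd_mem_Icc hv hw t).2) hu.nonneg
      fun α hα => (hlevel α hα).superset)

end FuzzyVector

theorem stmt13 {n : ℕ} (u v w : EuclideanSpace ℝ (Fin n) → ℝ)
    (hu : IsFuzzyVector u) (hv : IsFuzzyVector v) (hw : IsFuzzyVector w) :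
    (u = fuzzyAdd v w ↔
      ∀ α ∈ Set.Icc (0:ℝ) 1, levelSet u α = levelSet v α + levelSet w α) ∧
    (u = fuzzyAdd v w ↔
      ∀ α ∈ Set.Icc (0:ℝ) 1, ∀ x : EuclideanSpace ℝ (Fin n), ‖x‖ = 1 →
        fuzzySupp u α x = fuzzySupp v α x + fuzzySupp w α x) := by
  have hlevel := eq_fuzzyAdd_iff_levelSet_eq hu hv hw
  refine ⟨hlevel, hlevel.trans (forall₂_congr fun α hα => ?_)⟩
  exact eq_add_iff_supportFun_eq (hu.isCompact_levelSet hα.1) (hv.isCompact_levelSet hα.1)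
    (hw.isCompact_levelSet hα.1) (hu.convex_levelSet α) (hv.convex_levelSet α)
    (hw.convex_levelSet α) (hu.levelSet_nonempty hα.2) (hv.levelSet_nonempty hα.2)
    (hw.levelSet_nonempty hα.2)
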